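/- Suppose ‖u^t‖_∞ ≤ U for all t. Then for every T ≥ 3 and every comparator π ∈ Δ(A), the cumulative regret of the piKL iterates with respect to the regularized utilities satisfies ∑_{t=1}^T [ ũ_λ(π; u^t) − ũ_λ(x^t; u^t) ] ≤ (U²/2) · min{ 2 log T / λ, T η } + (log n)/η + λ (log n + Q), where ũ_λ(x; u) := ⟨u, x⟩ − λ D_KL(x‖τ) and Q := −(1/n) ∑_{a∈A} log τ(a). In particular, the regret with respect to the regularized utilities grows only logarithmically in T. -/

import Mathlib

/-!
piKL is follow-the-regularized-leader on the regularized utilities `ũ_λ(·; u^t)` with regularizer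
`φ / η`: after `k` rounds it maximizes `⟨G_k, y⟩ - c_k φ(y)` over the simplex, where
`G_k = ∑_{s ≤ k} u^s + λ k log τ` and `c_k = λ k + 1 / η`. By Gibbs' variational principle the
maximizer `x^{k+1}` is the softmax of `G_k / c_k`, and the objective at `y` falls short of the
maximum by exactly `c_k KL(y ‖ x^{k+1})`. The be-the-leader argument then bounds the regret by
`log n / η`, plus the stability terms `⟨u^{k+1}, x^{k+2} - x^{k+1}⟩ - c_k KL(x^{k+2} ‖ x^{k+1})`,
plus a telescoping sum `λ (KL(x^1 ‖ τ) - KL(x^{T+1} ‖ τ)) ≤ λ (Q - log n)`.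

By Pinsker's inequality and AM-GM, a stability term is at most `U² / (2γ) + (γ - c_k) KL` for
every `γ > 0`. Taking `γ = c_k ≥ max (1 / η) (λ k)` gives `U² η / 2` or `U² / (2 λ k)`, whose sums
are `U² T η / 2` and (harmonic series) `U² log T / λ`; in the first round `γ = c_0 + 2λ` costs an
extra `2 λ KL(x^2 ‖ x^1) ≤ 2 λ log n`.
-/

open Finset Real

noncomputable section

/-- The probability simplex over a finite set `A`. -/
def simplex (A : Type*) [Fintype A] : Set (A → ℝ) :=
  {x | (∀ a, 0 ≤ x a) ∧ ∑ a, x a = 1}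

/-- KL divergence (with the convention `0 log 0 = 0`, automatic here). -/
def KL {A : Type*} [Fintype A] (x y : A → ℝ) : ℝ :=
  ∑ a, x a * Real.log (x a / y a)

/-- Euclidean inner product on `A → ℝ`. -/
def ip {A : Type*} [Fintype A] (u x : A → ℝ) : ℝ := ∑ a, u a * x a

/-- Sup norm (maximum absolute value of the entries). -/
def supNorm {A : Type*} [Fintype A] [Nonempty A] (u : A → ℝ) : ℝ :=
  Finset.univ.sup' Finset.univ_nonempty (fun a => |u a|)

/-- Its nonnegativity is the one-variable core of Pinsker's inequality. -/
def pinskerGap (t : ℝ) : ℝ := 2 * (t + 2) * (t * log t - t + 1) - 3 * (t - 1) ^ 2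

lemma hasDerivAt_pinskerGap {t : ℝ} (ht : 0 < t) :
    HasDerivAt pinskerGap (2 * (t * log t - t + 1) + 2 * (t + 2) * log t - 6 * (t - 1)) t := by
  refine (((((hasDerivAt_id t).add_const 2).const_mul 2).mul
    (((hasDerivAt_mul_log ht.ne').sub (hasDerivAt_id t)).add_const 1)).sub
    ((((hasDerivAt_id t).sub_const 1).pow 2).const_mul 3)).congr_deriv ?_
  simp only [id, Pi.sub_apply]
  ring

lemma hasDerivAt_deriv_pinskerGap {t : ℝ} (ht : 0 < t) :
    HasDerivAt (fun t : ℝ => 2 * (t * log t - t + 1) + 2 * (t + 2) * log t - 6 * (t - 1))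
      (4 * (log t + t⁻¹ - 1)) t := by
  refine ((((((hasDerivAt_mul_log ht.ne').sub (hasDerivAt_id t)).add_const 1).const_mul 2).add
    ((((hasDerivAt_id t).add_const 2).const_mul 2).mul (hasDerivAt_log ht.ne'))).sub
    (((hasDerivAt_id t).sub_const 1).const_mul 6)).congr_deriv ?_
  simp only [id]
  field_simp
  ring

lemma convexOn_pinskerGap : ConvexOn ℝ (Set.Ioi 0) pinskerGap := by
  refine convexOn_of_hasDerivWithinAt2_nonneg (convex_Ioi 0)
    (fun t ht => (hasDerivAt_pinskerGap ht).continuousAt.continuousWithinAt) ?_ ?_ ?_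
    (f' := fun t => 2 * (t * log t - t + 1) + 2 * (t + 2) * log t - 6 * (t - 1))
    (f'' := fun t => 4 * (log t + t⁻¹ - 1)) <;> rw [interior_Ioi]
  · exact fun t ht => (hasDerivAt_pinskerGap ht).hasDerivWithinAt
  · exact fun t ht => (hasDerivAt_deriv_pinskerGap ht).hasDerivWithinAt
  · intro t ht
    have := one_sub_inv_le_log_of_pos ht
    linarith

lemma pinskerGap_nonneg {t : ℝ} (ht : 0 < t) : 0 ≤ pinskerGap t := by
  have hderiv := hasDerivAt_pinskerGap one_pos
  norm_num at hderiv
  have hmin := convexOn_pinskerGap.isMinOn_of_rightDeriv_eq_zero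
    (by rw [interior_Ioi]; exact Set.mem_Ioi.2 one_pos)
    (hderiv.hasDerivWithinAt.derivWithin (uniqueDiffWithinAt_Ioi 1)) (Set.mem_Ioi.2 ht)
  simpa [pinskerGap] using hmin

lemma three_mul_sub_sq_div_le {p q : ℝ} (hp : 0 ≤ p) (hq : 0 < q) :
    3 * (p - q) ^ 2 / (p + 2 * q) ≤ 2 * (p * log (p / q) - p + q) := by
  rw [div_le_iff₀ (by positivity)]
  rcases hp.eq_or_lt with rfl | hp
  · simp only [zero_sub, zero_div, log_zero, mul_zero, zero_add, even_two, Even.neg_pow]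
    nlinarith
  · have h := pinskerGap_nonneg (div_pos hp hq)
    rw [pinskerGap, sub_nonneg] at h
    calc 3 * (p - q) ^ 2 = q ^ 2 * (3 * (p / q - 1) ^ 2) := by field_simp
      _ ≤ q ^ 2 * (2 * (p / q + 2) * (p / q * log (p / q) - p / q + 1)) := by gcongr
      _ = 2 * (p * log (p / q) - p + q) * (p + 2 * q) := by field_simp

lemma sum_range_inv_add_one_le {m : ℕ} (hm : 2 ≤ m) :
    ∑ k ∈ range m, ((k : ℝ) + 1)⁻¹ ≤ 2 * log (m + 1) - 1 / 2 := by
  induction m, hm using Nat.le_induction with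
  | base =>
    have h3 : 1 ≤ log 3 := by
      rw [le_log_iff_exp_le (by norm_num)]
      exact exp_one_lt_d9.le.trans (by norm_num)
    norm_num [sum_range_succ]
    linarith
  | succ m hm ih =>
    have hlog := one_sub_inv_le_log_of_pos (show (0 : ℝ) < (m + 2) / (m + 1) by positivity)
    rw [log_div (by positivity) (by positivity), inv_div] at hlog
    have hstep : ((m : ℝ) + 1)⁻¹ ≤ 2 * (1 - (m + 1) / (m + 2)) := by
      rw [one_sub_div (by positivity), inv_le_iff_one_le_mul₀ (by positivity)]
      field_simp
      linarith
    rw [sum_range_succ]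
    push_cast
    rw [show (m : ℝ) + 1 + 1 = m + 2 by ring]
    linarith

section Divergence

variable {A : Type*} [Fintype A]

def negEntropy (y : A → ℝ) : ℝ := ∑ a, y a * log (y a)

lemma negEntropy_nonpos {y : A → ℝ} (hy : y ∈ simplex A) : negEntropy y ≤ 0 :=
  sum_nonpos fun a _ => mul_nonpos_of_nonneg_of_nonpos (hy.1 a)
    (log_nonpos (hy.1 a) (hy.2 ▸ single_le_sum (fun b _ => hy.1 b) (mem_univ a)))

lemma KL_eq_negEntropy_sub {y q : A → ℝ} (hq : ∀ a, q a ≠ 0) :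
    KL y q = negEntropy y - ∑ a, y a * log (q a) := by
  rw [KL, negEntropy, ← sum_sub_distrib]
  refine sum_congr rfl fun a _ => ?_
  rcases eq_or_ne (y a) 0 with h | h
  · simp [h]
  · rw [log_div h (hq a)]
    ring

lemma KL_self (q : A → ℝ) : KL q q = 0 :=
  sum_eq_zero fun a _ => by
    rcases eq_or_ne (q a) 0 with h | h
    · simp [h]
    · simp [div_self h]

/-- **Pinsker's inequality**. -/
theorem sq_sum_abs_sub_le_two_mul_KL {p q : A → ℝ} (hp : p ∈ simplex A) (hq : q ∈ simplex A)
    (hqpos : ∀ a, 0 < q a) : (∑ a, |p a - q a|) ^ 2 ≤ 2 * KL p q := by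
  have hw : ∀ a ∈ univ, 0 < (p a + 2 * q a) / 3 := fun a _ => by
    have := hp.1 a; have := hqpos a; positivity
  have hwsum : ∑ a, (p a + 2 * q a) / 3 = 1 := by
    rw [← sum_div, sum_add_distrib, ← mul_sum, hp.2, hq.2]
    norm_num
  have hKL : ∑ a, 2 * (p a * log (p a / q a) - p a + q a) = 2 * KL p q := by
    rw [← mul_sum, sum_add_distrib, sum_sub_distrib, hp.2, hq.2, KL]
    ring
  calc (∑ a, |p a - q a|) ^ 2
      = (∑ a, |p a - q a|) ^ 2 / ∑ a, (p a + 2 * q a) / 3 := by rw [hwsum, div_one]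
    _ ≤ ∑ a, |p a - q a| ^ 2 / ((p a + 2 * q a) / 3) := sq_sum_div_le_sum_sq_div _ _ hw
    _ = ∑ a, 3 * (p a - q a) ^ 2 / (p a + 2 * q a) :=
        sum_congr rfl fun a _ => by rw [sq_abs, div_div_eq_mul_div]; ring
    _ ≤ 2 * KL p q :=
        hKL ▸ sum_le_sum fun a _ => three_mul_sub_sq_div_le (hp.1 a) (hqpos a)

lemma KL_nonneg {p q : A → ℝ} (hp : p ∈ simplex A) (hq : q ∈ simplex A)
    (hqpos : ∀ a, 0 < q a) : 0 ≤ KL p q := by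
  linarith [sq_sum_abs_sub_le_two_mul_KL hp hq hqpos, sq_nonneg (∑ a, |p a - q a|)]

lemma ip_sub_ip_le {v P Q : A → ℝ} {U γ : ℝ} (hP : P ∈ simplex A) (hQ : Q ∈ simplex A)
    (hQpos : ∀ a, 0 < Q a) (hv : ∀ a, |v a| ≤ U) (hγ : 0 < γ) :
    ip v P - ip v Q ≤ U ^ 2 / (2 * γ) + γ * KL P Q := by
  set L := ∑ a, |P a - Q a|
  have hpinsker : L ^ 2 ≤ 2 * KL P Q := sq_sum_abs_sub_le_two_mul_KL hP hQ hQpos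
  have hholder : ip v P - ip v Q ≤ U * L := by
    rw [ip, ip, ← sum_sub_distrib, mul_sum]
    refine sum_le_sum fun a _ => ?_
    calc v a * P a - v a * Q a ≤ |v a| * |P a - Q a| := by
          rw [← mul_sub, ← abs_mul]; exact le_abs_self _
      _ ≤ U * |P a - Q a| := by gcongr; exact hv a
  have hamgm : U * L ≤ U ^ 2 / (2 * γ) + γ * L ^ 2 / 2 := by
    have : 0 ≤ (U - γ * L) ^ 2 / (2 * γ) := by positivity
    have : U ^ 2 / (2 * γ) + γ * L ^ 2 / 2 - U * L = (U - γ * L) ^ 2 / (2 * γ) := by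
      field_simp; ring
    linarith
  nlinarith

def entropicObjective (G : A → ℝ) (c : ℝ) (y : A → ℝ) : ℝ := ip G y - c * negEntropy y

end Divergence

section Softmax

variable {A : Type*} [Fintype A] [Nonempty A]

def softmax (w : A → ℝ) (a : A) : ℝ := exp (w a) / ∑ b, exp (w b)

lemma sum_exp_pos (w : A → ℝ) : 0 < ∑ b, exp (w b) :=
  sum_pos (fun _ _ => exp_pos _) univ_nonempty

lemma softmax_pos (w : A → ℝ) (a : A) : 0 < softmax w a :=
  div_pos (exp_pos _) (sum_exp_pos w)

lemma softmax_mem_simplex (w : A → ℝ) : softmax w ∈ simplex A :=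
  ⟨fun a => (softmax_pos w a).le, by
    simp only [softmax, ← sum_div]
    exact div_self (sum_exp_pos w).ne'⟩

lemma softmax_const (c : ℝ) : softmax (fun _ : A => c) = fun _ => (Fintype.card A : ℝ)⁻¹ := by
  ext a
  simp only [softmax, sum_const, card_univ, nsmul_eq_mul]
  field_simp

lemma negEntropy_uniform :
    negEntropy (fun _ : A => (Fintype.card A : ℝ)⁻¹) = -log (Fintype.card A) := by
  simp [negEntropy, log_inv]

lemma KL_uniform_right_le {y : A → ℝ} (hy : y ∈ simplex A) :
    KL y (fun _ => (Fintype.card A : ℝ)⁻¹) ≤ log (Fintype.card A) := by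
  rw [KL_eq_negEntropy_sub (fun _ => by positivity), ← sum_mul, hy.2, log_inv]
  linarith [negEntropy_nonpos hy]

lemma KL_uniform_left_eq {q : A → ℝ} (hq : ∀ a, q a ≠ 0) :
    KL (fun _ => (Fintype.card A : ℝ)⁻¹) q
      = -log (Fintype.card A) + -(Fintype.card A : ℝ)⁻¹ * ∑ a, log (q a) := by
  rw [KL_eq_negEntropy_sub hq, negEntropy_uniform, ← mul_sum]
  ring

lemma KL_softmax {y : A → ℝ} (hy : y ∈ simplex A) (w : A → ℝ) :
    KL y (softmax w) = negEntropy y - ip w y + log (∑ b, exp (w b)) := by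
  rw [KL_eq_negEntropy_sub fun a => (softmax_pos w a).ne', ip]
  simp only [softmax, log_div (exp_ne_zero _) (sum_exp_pos w).ne', log_exp, mul_sub,
    sum_sub_distrib, ← sum_mul, hy.2, one_mul]
  simp only [mul_comm (y _)]
  ring

lemma entropicObjective_add_mul_KL_softmax_eq_mul_log (G : A → ℝ) {c : ℝ} (hc : c ≠ 0) {y : A → ℝ}
    (hy : y ∈ simplex A) :
    entropicObjective G c y + c * KL y (softmax fun a => G a / c)
      = c * log (∑ b, exp (G b / c)) := by
  have hip : ip (fun a => G a / c) y = ip G y / c := by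
    simp only [ip, sum_div, div_mul_eq_mul_div]
  rw [entropicObjective, KL_softmax hy, hip]
  field_simp
  ring

/-- Gibbs' variational principle. -/
lemma entropicObjective_add_mul_KL_softmax_eq (G : A → ℝ) {c : ℝ} (hc : c ≠ 0) {y : A → ℝ}
    (hy : y ∈ simplex A) :
    entropicObjective G c y + c * KL y (softmax fun a => G a / c)
      = entropicObjective G c (softmax fun a => G a / c) := by
  have h := entropicObjective_add_mul_KL_softmax_eq_mul_log G hc (softmax_mem_simplex fun a => G a / c)
  rw [KL_self, mul_zero, add_zero] at h
  rw [h, entropicObjective_add_mul_KL_softmax_eq_mul_log G hc hy]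

end Softmax

/-- The be-the-leader lemma of follow-the-regularized-leader. -/
theorem sum_sub_le_of_leader {α : Type*} {S : Set α} (F f B : ℕ → α → ℝ) (X : ℕ → α)
    (hXS : ∀ k, X k ∈ S) (hF : ∀ k y, F (k + 1) y = F k y + f k y)
    (hlead : ∀ k, ∀ y ∈ S, F k y + B k y ≤ F k (X k)) (hB : ∀ k, ∀ y ∈ S, 0 ≤ B k y)
    {p : α} (hp : p ∈ S) (T : ℕ) :
    ∑ k ∈ range T, (f k p - f k (X k))
      ≤ F 0 (X 0) - F 0 p + ∑ k ∈ range T, (f k (X (k + 1)) - f k (X k) - B k (X (k + 1))) := by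
  have hcomparator : ∑ k ∈ range T, f k p = F T p - F 0 p := by
    rw [← sum_range_sub fun k => F k p]
    exact sum_congr rfl fun k _ => by rw [hF]; ring
  have hleader : F T (X T) - F 0 (X 0)
      ≤ ∑ k ∈ range T, (f k (X (k + 1)) - B k (X (k + 1))) := by
    rw [← sum_range_sub fun k => F k (X k)]
    refine sum_le_sum fun k _ => ?_
    linarith [hF k (X (k + 1)), hlead k (X (k + 1)) (hXS (k + 1))]
  simp only [sum_sub_distrib] at hleader ⊢
  linarith [hlead T p hp, hB T p hp]

section Pikl

variable {A : Type*} [Fintype A] (τ : A → ℝ) (lam η : ℝ) (u : ℕ → A → ℝ)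

/-- The regularized utility `ũ_λ(y; v)`. -/
def regUtility (v y : A → ℝ) : ℝ := ip v y - lam * KL y τ

def piklScore (k : ℕ) (a : A) : ℝ := ∑ s ∈ Icc 1 k, u s a + lam * k * log (τ a)

def piklTemp (k : ℕ) : ℝ := lam * k + η⁻¹

/-- The piKL iterate `x^{k+1}`: piKL is follow-the-regularized-leader on the regularized utilities
with regularizer `φ / η`, whose objective after `k` rounds is
`entropicObjective (piklScore k) (piklTemp k)`. -/
def piklLeader [Nonempty A] (k : ℕ) : A → ℝ :=
  softmax fun a => piklScore τ lam u k a / piklTemp lam η k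

def piklStabilityTerm [Nonempty A] (k : ℕ) : ℝ :=
  ip (u (k + 1)) (piklLeader τ lam η u (k + 1)) - ip (u (k + 1)) (piklLeader τ lam η u k)
    - piklTemp lam η k * KL (piklLeader τ lam η u (k + 1)) (piklLeader τ lam η u k)

lemma piklLeader_mem_simplex [Nonempty A] (k : ℕ) : piklLeader τ lam η u k ∈ simplex A :=
  softmax_mem_simplex _

lemma piklLeader_pos [Nonempty A] (k : ℕ) (a : A) : 0 < piklLeader τ lam η u k a :=
  softmax_pos _ a

variable {τ lam η u}

lemma piklTemp_pos (hlam : 0 ≤ lam) (hη : 0 < η) (k : ℕ) : 0 < piklTemp lam η k := by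
  unfold piklTemp
  positivity

lemma entropicObjective_piklScore_succ (hτ : ∀ a, τ a ≠ 0) (k : ℕ) (y : A → ℝ) :
    entropicObjective (piklScore τ lam u (k + 1)) (piklTemp lam η (k + 1)) y
      = entropicObjective (piklScore τ lam u k) (piklTemp lam η k) y
        + regUtility τ lam (u (k + 1)) y := by
  simp only [entropicObjective, regUtility, KL_eq_negEntropy_sub hτ, ip, piklScore, piklTemp,
    sum_Icc_succ_top (Nat.le_add_left 1 k)]
  push_cast
  simp only [add_mul, mul_add, sum_add_distrib]
  have hτterm : ∑ a, lam * 1 * log (τ a) * y a = lam * ∑ a, y a * log (τ a) := by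
    rw [mul_sum]
    exact sum_congr rfl fun a _ => by ring
  rw [hτterm]
  ring

lemma sum_le_of_stability_eta {U : ℝ} {s D : ℕ → ℝ} (hlam : 0 ≤ lam) (hη : 0 < η)
    (hs : ∀ k, ∀ γ > 0, s k ≤ U ^ 2 / (2 * γ) + (γ - piklTemp lam η k) * D k) (T : ℕ) :
    ∑ k ∈ range T, s k ≤ U ^ 2 / 2 * (T * η) := by
  have hstep : ∀ k ∈ range T, s k ≤ U ^ 2 / 2 * η := fun k _ => by
    have h := hs k _ (piklTemp_pos hlam hη k)
    rw [sub_self, zero_mul, add_zero] at h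
    have hinv : (piklTemp lam η k)⁻¹ ≤ η := by
      refine inv_le_of_inv_le₀ hη ?_
      have : 0 ≤ lam * k := by positivity
      unfold piklTemp
      linarith
    calc s k ≤ U ^ 2 / 2 * (piklTemp lam η k)⁻¹ := h.trans_eq (by ring)
      _ ≤ U ^ 2 / 2 * η := by gcongr
  calc ∑ k ∈ range T, s k ≤ ∑ _k ∈ range T, U ^ 2 / 2 * η := sum_le_sum hstep
    _ = U ^ 2 / 2 * (T * η) := by rw [sum_const, card_range, nsmul_eq_mul]; ring

lemma sum_le_of_stability_log {U L : ℝ} {s D : ℕ → ℝ} (hlam : 0 < lam) (hη : 0 < η)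
    (hD0 : D 0 ≤ L)
    (hs : ∀ k, ∀ γ > 0, s k ≤ U ^ 2 / (2 * γ) + (γ - piklTemp lam η k) * D k) {T : ℕ}
    (hT : 3 ≤ T) :
    ∑ k ∈ range T, s k ≤ U ^ 2 / 2 * (2 * log T / lam) + 2 * lam * L := by
  obtain ⟨m, rfl⟩ : ∃ m, T = m + 1 := ⟨T - 1, by omega⟩
  -- `piklTemp 0 = 1 / η` is not of order `λ`: pay `2λ D 0` to use `piklTemp 0 + 2λ` instead.
  have hfirst : s 0 ≤ U ^ 2 / (2 * lam) * (1 / 2) + 2 * lam * L := by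
    have h := hs 0 _ (add_pos (piklTemp_pos hlam.le hη 0) (mul_pos two_pos hlam))
    rw [add_sub_cancel_left] at h
    have hU : U ^ 2 / (2 * (piklTemp lam η 0 + 2 * lam)) ≤ U ^ 2 / (2 * lam) * (1 / 2) := by
      rw [div_mul_div_comm, mul_one]
      exact div_le_div_of_nonneg_left (sq_nonneg U) (by positivity)
        (by linarith [piklTemp_pos hlam.le hη 0])
    nlinarith
  have hlater : ∀ k ∈ range m, s (k + 1) ≤ U ^ 2 / (2 * lam) * ((k : ℝ) + 1)⁻¹ := fun k _ => by
    have h := hs (k + 1) _ (piklTemp_pos hlam.le hη (k + 1))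
    rw [sub_self, zero_mul, add_zero] at h
    refine h.trans ?_
    rw [← div_eq_mul_inv, div_div]
    refine div_le_div_of_nonneg_left (sq_nonneg U) (by positivity) ?_
    unfold piklTemp
    push_cast
    linarith [inv_pos.2 hη]
  have hharmonic := sum_range_inv_add_one_le (m := m) (by omega)
  rw [sum_range_succ']
  calc ∑ k ∈ range m, s (k + 1) + s 0
      ≤ U ^ 2 / (2 * lam) * ∑ k ∈ range m, ((k : ℝ) + 1)⁻¹
        + (U ^ 2 / (2 * lam) * (1 / 2) + 2 * lam * L) := by
        rw [mul_sum]; exact add_le_add (sum_le_sum hlater) hfirst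
    _ ≤ U ^ 2 / (2 * lam) * (2 * log (m + 1) - 1 / 2)
        + (U ^ 2 / (2 * lam) * (1 / 2) + 2 * lam * L) := by gcongr
    _ = U ^ 2 / 2 * (2 * log ↑(m + 1) / lam) + 2 * lam * L := by
        push_cast; field_simp; ring

lemma sum_le_of_stability {U L : ℝ} {s D : ℕ → ℝ} (hlam : 0 < lam) (hη : 0 < η)
    (hD0 : D 0 ≤ L) (hL : 0 ≤ L)
    (hs : ∀ k, ∀ γ > 0, s k ≤ U ^ 2 / (2 * γ) + (γ - piklTemp lam η k) * D k) {T : ℕ}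
    (hT : 3 ≤ T) :
    ∑ k ∈ range T, s k ≤ U ^ 2 / 2 * min (2 * log T / lam) (T * η) + 2 * lam * L := by
  rcases min_cases (2 * log T / lam) (T * η) with ⟨h, _⟩ | ⟨h, _⟩ <;> rw [h]
  · exact sum_le_of_stability_log hlam hη hD0 hs hT
  · linarith [sum_le_of_stability_eta hlam.le hη hs T,
      mul_nonneg (mul_nonneg zero_le_two hlam.le) hL]

variable [Nonempty A]

lemma piklLeader_zero : piklLeader τ lam η u 0 = fun _ => (Fintype.card A : ℝ)⁻¹ := by
  have : Icc 1 0 = ∅ := rfl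
  simp only [piklLeader, piklScore, this, sum_empty, Nat.cast_zero, mul_zero, zero_mul, add_zero,
    zero_div, softmax_const]

lemma entropicObjective_piklLeader (hlam : 0 ≤ lam) (hη : 0 < η) (k : ℕ) {y : A → ℝ}
    (hy : y ∈ simplex A) :
    entropicObjective (piklScore τ lam u k) (piklTemp lam η k) y
        + piklTemp lam η k * KL y (piklLeader τ lam η u k)
      = entropicObjective (piklScore τ lam u k) (piklTemp lam η k) (piklLeader τ lam η u k) :=
  entropicObjective_add_mul_KL_softmax_eq _ (piklTemp_pos hlam hη k).ne' hy

lemma sum_regUtility_sub_piklLeader_le (hτ : ∀ a, τ a ≠ 0) (hlam : 0 ≤ lam) (hη : 0 < η)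
    {p : A → ℝ} (hp : p ∈ simplex A) (T : ℕ) :
    ∑ k ∈ range T,
        (regUtility τ lam (u (k + 1)) p - regUtility τ lam (u (k + 1)) (piklLeader τ lam η u k))
      ≤ log (Fintype.card A) / η + ∑ k ∈ range T, piklStabilityTerm τ lam η u k
        + lam * (KL (piklLeader τ lam η u 0) τ - KL (piklLeader τ lam η u T) τ) := by
  have hbtl := sum_sub_le_of_leader
    (fun k => entropicObjective (piklScore τ lam u k) (piklTemp lam η k))
    (fun k => regUtility τ lam (u (k + 1)))
    (fun k y => piklTemp lam η k * KL y (piklLeader τ lam η u k)) (piklLeader τ lam η u)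
    (piklLeader_mem_simplex τ lam η u) (entropicObjective_piklScore_succ hτ)
    (fun k y hy => (entropicObjective_piklLeader hlam hη k hy).le)
    (fun k y hy => mul_nonneg (piklTemp_pos hlam hη k).le
      (KL_nonneg hy (piklLeader_mem_simplex τ lam η u k) (piklLeader_pos τ lam η u k)))
    hp T
  have hscore : piklScore τ lam u 0 = 0 := by
    ext a
    simp [piklScore]
  have hinit : entropicObjective (piklScore τ lam u 0) (piklTemp lam η 0) (piklLeader τ lam η u 0)
      - entropicObjective (piklScore τ lam u 0) (piklTemp lam η 0) p
      ≤ log (Fintype.card A) / η := by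
    simp only [entropicObjective, hscore, piklLeader_zero, negEntropy_uniform, piklTemp, ip,
      Pi.zero_apply, zero_mul, sum_const_zero, Nat.cast_zero, mul_zero, zero_add]
    have := mul_nonpos_of_nonneg_of_nonpos (inv_pos.2 hη).le (negEntropy_nonpos hp)
    rw [div_eq_inv_mul]
    linarith
  have hstep : ∀ k, regUtility τ lam (u (k + 1)) (piklLeader τ lam η u (k + 1))
        - regUtility τ lam (u (k + 1)) (piklLeader τ lam η u k)
        - piklTemp lam η k * KL (piklLeader τ lam η u (k + 1)) (piklLeader τ lam η u k)
      = piklStabilityTerm τ lam η u k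
        + lam * (KL (piklLeader τ lam η u k) τ - KL (piklLeader τ lam η u (k + 1)) τ) := fun k => by
    unfold regUtility piklStabilityTerm
    ring
  rw [sum_congr rfl fun k _ => hstep k, sum_add_distrib, ← mul_sum,
    sum_range_sub' fun k => KL (piklLeader τ lam η u k) τ] at hbtl
  linarith

lemma sum_piklStabilityTerm_le {U : ℝ} (hlam : 0 < lam) (hη : 0 < η)
    (hu : ∀ k a, |u (k + 1) a| ≤ U) {T : ℕ} (hT : 3 ≤ T) :
    ∑ k ∈ range T, piklStabilityTerm τ lam η u k
      ≤ U ^ 2 / 2 * min (2 * log T / lam) (T * η) + 2 * lam * log (Fintype.card A) := by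
  refine sum_le_of_stability (D := fun k => KL (piklLeader τ lam η u (k + 1))
    (piklLeader τ lam η u k)) hlam hη ?_ (log_nonneg (Nat.one_le_cast.2 Fintype.card_pos))
    (fun k γ hγ => ?_) hT
  · rw [piklLeader_zero]
    exact KL_uniform_right_le (piklLeader_mem_simplex τ lam η u 1)
  · unfold piklStabilityTerm
    linarith [ip_sub_ip_le (piklLeader_mem_simplex τ lam η u (k + 1))
      (piklLeader_mem_simplex τ lam η u k) (piklLeader_pos τ lam η u k) (hu k) hγ]

lemma eq_piklLeader_of_update (hlam : 0 ≤ lam) (hη : 0 < η) {x : ℕ → A → ℝ}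
    (hx1 : ∀ a, x 1 a = (Fintype.card A : ℝ)⁻¹)
    (hxsucc : ∀ t, 1 ≤ t → ∀ a : A,
      x (t + 1) a =
        Real.exp ((((t : ℝ)⁻¹ * ∑ s ∈ Finset.Icc 1 t, u s a) + lam * Real.log (τ a))
            / (lam + 1 / (η * t)))
        / ∑ b, Real.exp ((((t : ℝ)⁻¹ * ∑ s ∈ Finset.Icc 1 t, u s b) + lam * Real.log (τ b))
            / (lam + 1 / (η * t))))
    (k : ℕ) : x (k + 1) = piklLeader τ lam η u k := by
  ext a
  rcases Nat.eq_zero_or_pos k with rfl | hk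
  · rw [hx1, piklLeader_zero]
  · have hk' : (0 : ℝ) < k := Nat.cast_pos.2 hk
    have harg : ∀ b, ((k : ℝ)⁻¹ * ∑ s ∈ Icc 1 k, u s b + lam * log (τ b)) / (lam + 1 / (η * k))
        = piklScore τ lam u k b / piklTemp lam η k := fun b => by
      unfold piklScore piklTemp
      field_simp
    simp only [hxsucc k hk, harg, piklLeader, softmax]

end Pikl

/-- logarithmic cumulative regret of piKL with respect to the regularized
utilities `ũ_λ(x; u) := ⟨u, x⟩ − λ D_KL(x‖τ)`: if `‖u^t‖_∞ ≤ U` for all `t`, then for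
every `T ≥ 3` and every comparator `π ∈ Δ(A)`,
`∑_{t=1}^T [ũ_λ(π; u^t) − ũ_λ(x^t; u^t)]
   ≤ (U²/2)·min{2 log T/λ, Tη} + (log n)/η + λ(log n + Q)`,
where `n = |A|` and `Q = −(1/n)∑_a log τ(a)`. -/
theorem pikl_cumulative_regret_bound
    {A : Type*} [Fintype A] [Nonempty A]
    (τ : A → ℝ) (hτ : τ ∈ simplex A) (hτpos : ∀ a, 0 < τ a)
    (lam η : ℝ) (hlam : 0 < lam) (hη : 0 < η)
    (u : ℕ → A → ℝ) (U : ℝ)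
    (hU : ∀ t : ℕ, 1 ≤ t → supNorm (u t) ≤ U)
    (x : ℕ → A → ℝ)
    (hx1 : ∀ a, x 1 a = (Fintype.card A : ℝ)⁻¹)
    (hxsucc : ∀ t, 1 ≤ t → ∀ a : A,
      x (t + 1) a =
        Real.exp ((((t : ℝ)⁻¹ * ∑ s ∈ Finset.Icc 1 t, u s a) + lam * Real.log (τ a))
            / (lam + 1 / (η * t)))
        / ∑ b, Real.exp ((((t : ℝ)⁻¹ * ∑ s ∈ Finset.Icc 1 t, u s b) + lam * Real.log (τ b))
            / (lam + 1 / (η * t)))) :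
    ∀ T : ℕ, 3 ≤ T → ∀ p ∈ simplex A,
      ∑ t ∈ Finset.Icc 1 T,
          ((ip (u t) p - lam * KL p τ) - (ip (u t) (x t) - lam * KL (x t) τ))
        ≤ U ^ 2 / 2 * min (2 * Real.log T / lam) ((T : ℝ) * η)
          + Real.log (Fintype.card A) / η
          + lam * (Real.log (Fintype.card A)
              + (-(Fintype.card A : ℝ)⁻¹ * ∑ a, Real.log (τ a))) := by
  intro T hT p hp
  have hx := eq_piklLeader_of_update hlam.le hη hx1 hxsucc
  have hu : ∀ k a, |u (k + 1) a| ≤ U := fun k a =>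
    (le_sup' (fun a => |u (k + 1) a|) (mem_univ a)).trans (hU (k + 1) (Nat.le_add_left 1 k))
  have hregret : ∑ t ∈ Icc 1 T,
        ((ip (u t) p - lam * KL p τ) - (ip (u t) (x t) - lam * KL (x t) τ))
      = ∑ k ∈ range T, (regUtility τ lam (u (k + 1)) p
          - regUtility τ lam (u (k + 1)) (piklLeader τ lam η u k)) := by
    simp only [← hx]
    rw [range_eq_Ico,
      sum_Ico_add' fun t => regUtility τ lam (u t) p - regUtility τ lam (u t) (x t),
      Ico_add_one_right_eq_Icc]
    rfl
  have hleader :=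
    sum_regUtility_sub_piklLeader_le (u := u) (fun a => (hτpos a).ne') hlam.le hη hp T
  rw [piklLeader_zero, KL_uniform_left_eq fun a => (hτpos a).ne'] at hleader
  rw [hregret]
  linarith [sum_piklStabilityTerm_le (τ := τ) hlam hη hu hT,
    mul_nonneg hlam.le (KL_nonneg (piklLeader_mem_simplex τ lam η u T) hτ hτpos)]
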